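/- arXiv:2010.04597 — 2 statements merged into one kernel-verified Lean document; each statement's English description precedes it below -/
import Mathlib

section
/- Let H be a real Hilbert space, X ⊆ H nonempty closed convex, A : H → H pseudo-monotone, h* a solution of VI(A,X), w ∈ H, τ > 0, and y = P_X(w − τ A(w)). Then ‖y − h*‖² ≤ ‖w − h*‖² − ‖y − w‖² − 2τ⟨A(w) − A(y), y − h*⟩. -/
/-! Projecting `w - τ A w` onto `X` gives the obtuse-angle inequality `⟪w - τ A w - y, h* - y⟫ ≤ 0`,
which turns the three-point identity for `‖w - h*‖²` into the bound with `⟪A w, y - h*⟫`.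
Pseudo-monotonicity applied to the variational inequality at `h*` gives `⟪A y, y - h*⟫ ≥ 0`,
so `A w` may be replaced by `A w - A y`. -/

open RealInnerProductSpace

section ProjectedStep

variable {H : Type*} [NormedAddCommGroup H] [InnerProductSpace ℝ H]

theorem real_inner_sub_nonpos_of_forall_norm_sub_le {X : Set H} (hconv : Convex ℝ X)
    {z y : H} (hy : y ∈ X) (hmin : ∀ u ∈ X, ‖z - y‖ ≤ ‖z - u‖) {x : H} (hx : x ∈ X) :
    ⟪z - y, x - y⟫ ≤ 0 := by
  have : Nonempty X := ⟨⟨y, hy⟩⟩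
  have hinf : ‖z - y‖ = ⨅ u : X, ‖z - u‖ :=
    le_antisymm (le_ciInf fun u => hmin u u.2)
      (ciInf_le ⟨0, fun _ ⟨_, h⟩ => h ▸ norm_nonneg _⟩ (⟨y, hy⟩ : X))
  exact (norm_eq_iInf_iff_real_inner_le_zero hconv hy).mp hinf x hx

theorem norm_sub_sq_eq_norm_sub_sq_sub_real_inner (w y x : H) :
    ‖y - x‖ ^ 2 = ‖w - x‖ ^ 2 - ‖y - w‖ ^ 2 - 2 * ⟪w - y, y - x⟫ := by
  have hsplit : w - x = (w - y) + (y - x) := by abel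
  rw [hsplit, norm_add_sq_real, ← norm_neg (y - w), neg_sub]
  ring

theorem norm_sub_sq_le_of_forall_norm_sub_le {X : Set H} (hconv : Convex ℝ X)
    {w a y : H} {τ : ℝ} (hy : y ∈ X) (hmin : ∀ u ∈ X, ‖(w - τ • a) - y‖ ≤ ‖(w - τ • a) - u‖)
    {x : H} (hx : x ∈ X) :
    ‖y - x‖ ^ 2 ≤ ‖w - x‖ ^ 2 - ‖y - w‖ ^ 2 - 2 * τ * ⟪a, y - x⟫ := by
  have hobtuse := real_inner_sub_nonpos_of_forall_norm_sub_le hconv hy hmin hx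
  have hexpand : ⟪(w - τ • a) - y, x - y⟫ = -⟪w - y, y - x⟫ + τ * ⟪a, y - x⟫ := by
    rw [sub_right_comm, inner_sub_left, real_inner_smul_left, ← neg_sub y x, inner_neg_right,
      inner_neg_right]
    ring
  rw [norm_sub_sq_eq_norm_sub_sq_sub_real_inner w y x]
  linarith

end ProjectedStep

theorem stmt_13_general {H : Type*} [NormedAddCommGroup H] [InnerProductSpace ℝ H]
    (X : Set H) (hconv : Convex ℝ X)
    (A : H → H)
    (hpseudo : ∀ u v : H, 0 ≤ ⟪A u, v - u⟫ → 0 ≤ ⟪A v, v - u⟫)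
    (hstar : H) (hmem : hstar ∈ X)
    (hsol : ∀ x ∈ X, 0 ≤ ⟪A hstar, x - hstar⟫)
    (w : H) (τ : ℝ) (hτ : 0 < τ) (y : H) (hy : y ∈ X)
    (hproj : ∀ u ∈ X, ‖(w - τ • A w) - y‖ ≤ ‖(w - τ • A w) - u‖) :
    ‖y - hstar‖ ^ 2 ≤
      ‖w - hstar‖ ^ 2 - ‖y - w‖ ^ 2 - 2 * τ * ⟪A w - A y, y - hstar⟫ := by
  have hstep := norm_sub_sq_le_of_forall_norm_sub_le hconv hy hproj hmem
  have hAy : 0 ≤ ⟪A y, y - hstar⟫ := hpseudo hstar y (hsol y hy)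
  rw [inner_sub_left]
  linarith [mul_nonneg hτ.le hAy]

theorem stmt_13 {H : Type*} [NormedAddCommGroup H] [InnerProductSpace ℝ H]
    (X : Set H) (hne : X.Nonempty) (hclosed : IsClosed X) (hconv : Convex ℝ X)
    (A : H → H)
    (hpseudo : ∀ u v : H, 0 ≤ ⟪A u, v - u⟫ → 0 ≤ ⟪A v, v - u⟫)
    (hstar : H) (hmem : hstar ∈ X)
    (hsol : ∀ x ∈ X, 0 ≤ ⟪A hstar, x - hstar⟫)
    (w : H) (τ : ℝ) (hτ : 0 < τ) (y : H) (hy : y ∈ X)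
    (hproj : ∀ u ∈ X, ‖(w - τ • A w) - y‖ ≤ ‖(w - τ • A w) - u‖) :
    ‖y - hstar‖ ^ 2 ≤
      ‖w - hstar‖ ^ 2 - ‖y - w‖ ^ 2 - 2 * τ * ⟪A w - A y, y - hstar⟫ :=
  stmt_13_general X hconv A hpseudo hstar hmem hsol w τ hτ y hy hproj
end

section
/- Let H be a real Hilbert space, X ⊆ H nonempty closed convex, A : H → H pseudo-monotone, h* a solution of VI(A,X), λ ∈ (0,1), μ ∈ (0,1), τ_n, τ_{n+1} > 0, w_n ∈ H, y_n = P_X(w_n − τ_n A(w_n)), and h_{n+1} = (1−λ)w_n + λ(y_n + τ_n(A(w_n) − A(y_n))). Assume ‖A(w_n) − A(y_n)‖ ≤ (μ/τ_{n+1})‖w_n − y_n‖. Then ‖h_{n+1} − h*‖² ≤ ‖w_n − h*‖² − λ(1 − μτ_n/τ_{n+1})(2 − λ + λμτ_n/τ_{n+1})‖y_n − w_n‖². -/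
/-!
Write `d = w - y` and `e = τ (A w - A y)`, so that `h_{n+1} - h* = (w - h*) - λ (d - e)`.
The variational inequality of the projection `y = P_X(w - τ A w)` tested at `h*`, together with
`⟪A y, y - h*⟫ ≥ 0` (pseudo-monotonicity applied to the solution `h*`), gives
`⟪y - h*, d - e⟫ ≥ 0`. Expanding the square and using `‖e‖ ≤ (μ τ_n / τ_{n+1}) ‖d‖` then leaves a
quadratic in `λ` whose coefficient is the claimed one.
-/

open RealInnerProductSpace

section

variable {H : Type*} [NormedAddCommGroup H] [InnerProductSpace ℝ H]

theorem real_inner_sub_le_zero_of_forall_norm_sub_le {K : Set H} (hK : Convex ℝ K) {x y : H}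
    (hy : y ∈ K) (hmin : ∀ u ∈ K, ‖x - y‖ ≤ ‖x - u‖) : ∀ u ∈ K, ⟪x - y, u - y⟫ ≤ 0 := by
  have : Nonempty K := ⟨⟨y, hy⟩⟩
  refine (norm_eq_iInf_iff_real_inner_le_zero hK hy).mp (le_antisymm ?_ ?_)
  · exact le_ciInf fun u => hmin u u.2
  · exact ciInf_le ⟨0, fun _ ⟨_, h⟩ => h ▸ norm_nonneg _⟩ (⟨y, hy⟩ : K)

theorem real_inner_sub_sub_smul_nonneg {A : H → H} {w y z : H} {τ : ℝ} (hτ : 0 ≤ τ)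
    (hproj : ⟪(w - τ • A w) - y, z - y⟫ ≤ 0) (hAy : 0 ≤ ⟪A y, y - z⟫) :
    0 ≤ ⟪y - z, (w - y) - τ • (A w - A y)⟫ := by
  have hsplit : ⟪y - z, (w - y) - τ • (A w - A y)⟫ =
      -⟪(w - τ • A w) - y, z - y⟫ + τ * ⟪A y, y - z⟫ := by
    simp only [inner_sub_left, inner_sub_right, inner_smul_left, inner_smul_right,
      RCLike.conj_to_real, real_inner_comm]
    ring
  rw [hsplit]
  linarith [mul_nonneg hτ hAy]

theorem norm_sub_smul_sub_sq_le {p d e : H} {c lam : ℝ} (hlam0 : 0 ≤ lam) (hlam1 : lam ≤ 1)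
    (he : ‖e‖ ≤ c * ‖d‖) (hangle : 0 ≤ ⟪p - d, d - e⟫) :
    ‖p - lam • (d - e)‖ ^ 2 ≤ ‖p‖ ^ 2 - lam * (1 - c) * (2 - lam + lam * c) * ‖d‖ ^ 2 := by
  have hexpand : ‖p - lam • (d - e)‖ ^ 2 = ‖p‖ ^ 2 - 2 * lam * (⟪p - d, d - e⟫ + ‖d‖ ^ 2)
      + (2 * lam - 2 * lam ^ 2) * ⟪d, e⟫ + lam ^ 2 * (‖e‖ ^ 2 + ‖d‖ ^ 2) := by
    rw [norm_sub_sq_real, norm_smul, Real.norm_of_nonneg hlam0, mul_pow, norm_sub_sq_real,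
      real_inner_smul_right, inner_sub_left, inner_sub_right, inner_sub_right,
      real_inner_self_eq_norm_sq]
    ring
  have hde : ⟪d, e⟫ ≤ c * ‖d‖ ^ 2 :=
    calc ⟪d, e⟫ ≤ ‖d‖ * ‖e‖ := real_inner_le_norm d e
      _ ≤ ‖d‖ * (c * ‖d‖) := mul_le_mul_of_nonneg_left he (norm_nonneg d)
      _ = c * ‖d‖ ^ 2 := by ring
  have he2 : ‖e‖ ^ 2 ≤ c ^ 2 * ‖d‖ ^ 2 := by
    rw [← mul_pow]
    exact pow_le_pow_left₀ (norm_nonneg e) he 2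
  rw [hexpand]
  nlinarith [mul_le_mul_of_nonneg_left hde (by nlinarith : 0 ≤ 2 * lam - 2 * lam ^ 2),
    mul_le_mul_of_nonneg_left he2 (sq_nonneg lam), mul_nonneg hlam0 hangle]

end

theorem stmt_14_general {H : Type*} [NormedAddCommGroup H] [InnerProductSpace ℝ H]
    (X : Set H) (hconv : Convex ℝ X)
    (A : H → H)
    (hpseudo : ∀ u v : H, 0 ≤ ⟪A u, v - u⟫ → 0 ≤ ⟪A v, v - u⟫)
    (hstar : H) (hmem : hstar ∈ X)
    (hsol : ∀ x ∈ X, 0 ≤ ⟪A hstar, x - hstar⟫)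
    (lam μ τn τn1 : ℝ) (hlam0 : 0 < lam) (hlam1 : lam < 1)
    (hτn : 0 < τn)
    (wn yn : H) (hyn : yn ∈ X)
    (hproj : ∀ u ∈ X, ‖(wn - τn • A wn) - yn‖ ≤ ‖(wn - τn • A wn) - u‖)
    (hstep : ‖A wn - A yn‖ ≤ μ / τn1 * ‖wn - yn‖)
    (hn1 : H)
    (hupdate : hn1 = (1 - lam) • wn + lam • (yn + τn • (A wn - A yn))) :
    ‖hn1 - hstar‖ ^ 2 ≤ ‖wn - hstar‖ ^ 2 -
      lam * (1 - μ * τn / τn1) * (2 - lam + lam * μ * τn / τn1) * ‖yn - wn‖ ^ 2 := by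
  have hangle : 0 ≤ ⟪(wn - hstar) - (wn - yn), (wn - yn) - τn • (A wn - A yn)⟫ := by
    rw [sub_sub_sub_cancel_left]
    exact real_inner_sub_sub_smul_nonneg hτn.le
      (real_inner_sub_le_zero_of_forall_norm_sub_le hconv hyn hproj hstar hmem)
      (hpseudo hstar yn (hsol yn hyn))
  have hshift : ‖τn • (A wn - A yn)‖ ≤ μ * τn / τn1 * ‖wn - yn‖ := by
    rw [norm_smul, Real.norm_of_nonneg hτn.le]
    calc τn * ‖A wn - A yn‖ ≤ τn * (μ / τn1 * ‖wn - yn‖) := by gcongr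
      _ = μ * τn / τn1 * ‖wn - yn‖ := by ring
  have hrw : hn1 - hstar = (wn - hstar) - lam • ((wn - yn) - τn • (A wn - A yn)) := by
    rw [hupdate]
    module
  rw [hrw, norm_sub_rev yn wn, mul_assoc lam μ, mul_div_assoc lam]
  exact norm_sub_smul_sub_sq_le hlam0.le hlam1.le hshift hangle

theorem stmt_14 {H : Type*} [NormedAddCommGroup H] [InnerProductSpace ℝ H]
    (X : Set H) (hne : X.Nonempty) (hclosed : IsClosed X) (hconv : Convex ℝ X)
    (A : H → H)
    (hpseudo : ∀ u v : H, 0 ≤ ⟪A u, v - u⟫ → 0 ≤ ⟪A v, v - u⟫)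
    (hstar : H) (hmem : hstar ∈ X)
    (hsol : ∀ x ∈ X, 0 ≤ ⟪A hstar, x - hstar⟫)
    (lam μ τn τn1 : ℝ) (hlam0 : 0 < lam) (hlam1 : lam < 1)
    (hμ0 : 0 < μ) (hμ1 : μ < 1) (hτn : 0 < τn) (hτn1 : 0 < τn1)
    (wn yn : H) (hyn : yn ∈ X)
    (hproj : ∀ u ∈ X, ‖(wn - τn • A wn) - yn‖ ≤ ‖(wn - τn • A wn) - u‖)
    (hstep : ‖A wn - A yn‖ ≤ μ / τn1 * ‖wn - yn‖)
    (hn1 : H)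
    (hupdate : hn1 = (1 - lam) • wn + lam • (yn + τn • (A wn - A yn))) :
    ‖hn1 - hstar‖ ^ 2 ≤ ‖wn - hstar‖ ^ 2 -
      lam * (1 - μ * τn / τn1) * (2 - lam + lam * μ * τn / τn1) * ‖yn - wn‖ ^ 2 :=
  stmt_14_general X hconv A hpseudo hstar hmem hsol lam μ τn τn1 hlam0 hlam1 hτn wn yn hyn hproj
    hstep hn1 hupdate
end
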